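/- Suppose λ_1 < 0 with multiplicity r (i.e., λ_1 = ⋯ = λ_r < λ_{r+1}), that [g_par]_i = 0 for 1 ≤ i ≤ r, and that the vector v̄ = −(Λ − λ_1 I)^† g_par satisfies ‖v̄‖₂ ≤ δ, where ^† denotes the Moore–Penrose pseudoinverse. Let α = √(δ² − ‖v̄‖₂²) and v* = v̄ + α e_1. Then (Λ − λ_1 I) v* = −g_par, ‖v*‖₂ = δ, and v* is a global minimizer of q_par(v) = g_par^T v + (1/2) v^T Λ v over the ball {v ∈ ℝ^{k+1} : ‖v‖₂ ≤ δ} (the 'hard case'). -/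

import Mathlib

open Matrix

/-- The Euclidean (two-)norm of a vector in `ℝ^m`. -/
noncomputable def norm2 {m : ℕ} (x : Fin m → ℝ) : ℝ := Real.sqrt (∑ i, x i ^ 2)

/-- The Moore–Penrose pseudoinverse of the diagonal matrix `diag d`. -/
noncomputable def diagPinv {m : ℕ} (d : Fin m → ℝ) : Matrix (Fin m) (Fin m) ℝ :=
  Matrix.diagonal (fun i => if d i = 0 then 0 else (d i)⁻¹)

/-!
`B = Λ - λ₁ I = diag(λᵢ - λ₁)` is positive semidefinite, and its kernel consists of the coordinates
with `λᵢ = λ₁`; by monotonicity these are among the first `r`, where `g_par` vanishes. So `g_par`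
lies in the range of `B`, the pseudoinverse solution `v̄` solves `B v = -g_par`, and so does
`v̄ + α e₁` for every `α`; as `v̄ ⟂ e₁`, the choice of `α` puts `v*` on the sphere. Optimality is
the sufficient half of the Moré–Sorensen conditions: from `B v* = -g_par`,
`q(v) - q(v*) = ½ (v - v*)ᵀ B (v - v*) + (λ₁ / 2)(‖v‖² - ‖v*‖²)`,
and both terms are nonnegative on the ball since `B ⪰ 0`, `λ₁ ≤ 0` and `‖v*‖ = δ`.
-/

section QuadModel

variable {ι : Type*} [Fintype ι] [DecidableEq ι]

noncomputable def quadModel (g : ι → ℝ) (A : Matrix ι ι ℝ) (v : ι → ℝ) : ℝ :=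
  g ⬝ᵥ v + 1 / 2 * (v ⬝ᵥ A *ᵥ v)

lemma quadModel_sub_quadModel {g : ι → ℝ} {A : Matrix ι ι ℝ} {c : ℝ} {x : ι → ℝ}
    (hsymm : (A - c • 1).IsSymm) (hx : (A - c • 1) *ᵥ x = -g) (v : ι → ℝ) :
    quadModel g A v - quadModel g A x =
      1 / 2 * ((v - x) ⬝ᵥ (A - c • 1) *ᵥ (v - x)) + c / 2 * (v ⬝ᵥ v - x ⬝ᵥ x) := by
  set B := A - c • 1
  have hA : A = B + c • 1 := by simp [B]
  have hg : g = -(B *ᵥ x) := by rw [hx, neg_neg]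
  have hcomm : x ⬝ᵥ B *ᵥ v = v ⬝ᵥ B *ᵥ x := by
    rw [← dotProduct_transpose_mulVec, hsymm.eq]
  simp only [quadModel, hA, hg, add_mulVec, smul_mulVec, one_mulVec, mulVec_sub,
    dotProduct_add, dotProduct_sub, sub_dotProduct, dotProduct_smul, neg_dotProduct,
    smul_eq_mul, hcomm, dotProduct_comm (B *ᵥ x) v,
    dotProduct_comm (B *ᵥ x) x]
  ring

theorem quadModel_le_of_posSemidef {g : ι → ℝ} {A : Matrix ι ι ℝ} {c : ℝ} {x v : ι → ℝ}
    (hc : c ≤ 0) (hB : (A - c • 1).PosSemidef) (hx : (A - c • 1) *ᵥ x = -g)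
    (hv : v ⬝ᵥ v ≤ x ⬝ᵥ x) :
    quadModel g A x ≤ quadModel g A v := by
  have hsymm : (A - c • 1).IsSymm := by
    rw [IsSymm, ← conjTranspose_eq_transpose_of_trivial]; exact hB.isHermitian
  have hcurv : 0 ≤ (v - x) ⬝ᵥ (A - c • 1) *ᵥ (v - x) := by
    simpa using hB.dotProduct_mulVec_nonneg (v - x)
  have := quadModel_sub_quadModel hsymm hx v
  nlinarith

end QuadModel

lemma dotProduct_self_add_smul_single {ι : Type*} [Fintype ι] [DecidableEq ι] {x : ι → ℝ}
    {j : ι} (hx : x j = 0) (α : ℝ) :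
    (x + α • Pi.single j 1) ⬝ᵥ (x + α • Pi.single j 1) = x ⬝ᵥ x + α ^ 2 := by
  rw [add_dotProduct, dotProduct_add, dotProduct_add, dotProduct_smul, dotProduct_smul,
    smul_dotProduct, smul_dotProduct, dotProduct_single_one, single_one_dotProduct,
    single_one_dotProduct, Pi.single_eq_same, hx, smul_eq_mul, smul_eq_mul, smul_eq_mul]
  ring

section Fin

variable {m : ℕ}

lemma norm2_nonneg (x : Fin m → ℝ) : 0 ≤ norm2 x := Real.sqrt_nonneg _

lemma norm2_sq (x : Fin m → ℝ) : norm2 x ^ 2 = x ⬝ᵥ x := by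
  rw [norm2, Real.sq_sqrt (by positivity)]
  simp only [dotProduct, sq]

lemma norm2_eq_iff {x : Fin m → ℝ} {δ : ℝ} (hδ : 0 ≤ δ) : norm2 x = δ ↔ x ⬝ᵥ x = δ ^ 2 := by
  rw [← norm2_sq, pow_left_inj₀ (norm2_nonneg x) hδ two_ne_zero]

lemma diagPinv_mulVec_apply (d g : Fin m → ℝ) (i : Fin m) :
    (diagPinv d *ᵥ g) i = (if d i = 0 then 0 else (d i)⁻¹) * g i := by
  simp [diagPinv, mulVec_diagonal]

lemma diagPinv_mulVec_apply_of_eq_zero {d : Fin m → ℝ} (g : Fin m → ℝ) {i : Fin m}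
    (hi : d i = 0) : (diagPinv d *ᵥ g) i = 0 := by
  simp [diagPinv_mulVec_apply, hi]

lemma diagonal_mulVec_diagPinv_mulVec {d g : Fin m → ℝ} (hg : ∀ i, d i = 0 → g i = 0) :
    diagonal d *ᵥ (diagPinv d *ᵥ g) = g := by
  ext i
  rw [mulVec_diagonal, diagPinv_mulVec_apply]
  by_cases hi : d i = 0
  · simp [hi, hg i hi]
  · simp [hi]

lemma diagonal_mulVec_neg_diagPinv_mulVec_add_single {d g : Fin m → ℝ}
    (hg : ∀ i, d i = 0 → g i = 0) {j : Fin m} (hj : d j = 0) (α : ℝ) :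
    diagonal d *ᵥ (-(diagPinv d *ᵥ g) + α • Pi.single j 1) = -g := by
  rw [mulVec_add, mulVec_neg, mulVec_smul, diagonal_mulVec_single, hj, zero_mul,
    Pi.single_zero, smul_zero, add_zero, diagonal_mulVec_diagPinv_mulVec hg]

end Fin

theorem qpar_minimizer_hard_case_general
    (k : ℕ) (lam : Fin (k + 1) → ℝ) (hmono : Monotone lam)
    (gpar : Fin (k + 1) → ℝ) (δ : ℝ)
    (qpar : (Fin (k + 1) → ℝ) → ℝ)
    (hq : ∀ v, qpar v = gpar ⬝ᵥ v + (1 / 2) * (v ⬝ᵥ (Matrix.diagonal lam).mulVec v))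
    (hneg : lam 0 < 0)
    (r : ℕ) (hr2 : r < k + 1)
    (hgt : lam 0 < lam ⟨r, hr2⟩)
    (hgzero : ∀ i : Fin (k + 1), (i : ℕ) < r → gpar i = 0)
    (vbar : Fin (k + 1) → ℝ)
    (hvbar : vbar = -(diagPinv (fun i => lam i - lam 0)).mulVec gpar)
    (hvbarnorm : norm2 vbar ≤ δ)
    (α : ℝ) (hα : α = Real.sqrt (δ ^ 2 - (norm2 vbar) ^ 2))
    (vstar : Fin (k + 1) → ℝ)
    (hvstar : vstar = vbar + α • (Pi.single 0 1 : Fin (k + 1) → ℝ)) :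
    (Matrix.diagonal lam - lam 0 • 1).mulVec vstar = -gpar ∧
    norm2 vstar = δ ∧
    (norm2 vstar ≤ δ ∧
      ∀ v : Fin (k + 1) → ℝ, norm2 v ≤ δ → qpar vstar ≤ qpar v) := by
  set d : Fin (k + 1) → ℝ := fun i => lam i - lam 0
  have hd0 : d 0 = 0 := sub_self _
  have hB : diagonal lam - lam 0 • 1 = diagonal d := by
    rw [smul_one_eq_diagonal, diagonal_sub]
  have hker : ∀ i, d i = 0 → gpar i = 0 := fun i hi =>
    hgzero i (hmono.reflect_lt (sub_eq_zero.1 hi ▸ hgt))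
  have hsolve : (diagonal lam - lam 0 • 1) *ᵥ vstar = -gpar := by
    rw [hB, hvstar, hvbar]
    exact diagonal_mulVec_neg_diagPinv_mulVec_add_single hker hd0 α
  have hδ : 0 ≤ δ := (norm2_nonneg vbar).trans hvbarnorm
  have hnorm : norm2 vstar = δ := by
    have hvbar0 : vbar 0 = 0 := by
      rw [hvbar, Pi.neg_apply, diagPinv_mulVec_apply_of_eq_zero gpar hd0, neg_zero]
    rw [norm2_eq_iff hδ, hvstar, dotProduct_self_add_smul_single hvbar0, ← norm2_sq, hα,
      Real.sq_sqrt (sub_nonneg.2 (pow_le_pow_left₀ (norm2_nonneg vbar) hvbarnorm 2))]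
    ring
  refine ⟨hsolve, hnorm, hnorm.le, fun v hv => ?_⟩
  rw [hq, hq]
  refine quadModel_le_of_posSemidef hneg.le ?_ hsolve ?_
  · rw [hB]; exact PosSemidef.diagonal fun i => sub_nonneg.2 (hmono (Fin.zero_le i))
  · rw [← norm2_sq, ← norm2_sq, hnorm]
    exact pow_le_pow_left₀ (norm2_nonneg v) hv 2

/-- **the "hard case".** Suppose `Λ = diag(λ₁,…,λ_{k+1})` with
`λ₁ ≤ … ≤ λ_{k+1}`, `λ₁ < 0` of multiplicity `r` (i.e. `λ₁ = ⋯ = λ_r < λ_{r+1}`),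
`[g_par]_i = 0` for `1 ≤ i ≤ r`, and `v̄ = -(Λ - λ₁ I)† g_par` satisfies `‖v̄‖₂ ≤ δ`.
With `α = √(δ² - ‖v̄‖₂²)` and `v* = v̄ + α e₁`, one has `(Λ - λ₁ I) v* = -g_par`,
`‖v*‖₂ = δ`, and `v*` is a global minimizer of `q_par(v) = g_parᵀ v + (1/2) vᵀ Λ v`
over `{v : ‖v‖₂ ≤ δ}`. -/
theorem qpar_minimizer_hard_case
    (k : ℕ) (lam : Fin (k + 1) → ℝ) (hmono : Monotone lam)
    (gpar : Fin (k + 1) → ℝ) (δ : ℝ) (hδ : 0 < δ)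
    (qpar : (Fin (k + 1) → ℝ) → ℝ)
    (hq : ∀ v, qpar v = gpar ⬝ᵥ v + (1 / 2) * (v ⬝ᵥ (Matrix.diagonal lam).mulVec v))
    (hneg : lam 0 < 0)
    (r : ℕ) (hr1 : 1 ≤ r) (hr2 : r < k + 1)
    (heq : ∀ i : Fin (k + 1), (i : ℕ) < r → lam i = lam 0)
    (hgt : lam 0 < lam ⟨r, hr2⟩)
    (hgzero : ∀ i : Fin (k + 1), (i : ℕ) < r → gpar i = 0)
    (vbar : Fin (k + 1) → ℝ)
    (hvbar : vbar = -(diagPinv (fun i => lam i - lam 0)).mulVec gpar)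
    (hvbarnorm : norm2 vbar ≤ δ)
    (α : ℝ) (hα : α = Real.sqrt (δ ^ 2 - (norm2 vbar) ^ 2))
    (vstar : Fin (k + 1) → ℝ)
    (hvstar : vstar = vbar + α • (Pi.single 0 1 : Fin (k + 1) → ℝ)) :
    (Matrix.diagonal lam - lam 0 • 1).mulVec vstar = -gpar ∧
    norm2 vstar = δ ∧
    (norm2 vstar ≤ δ ∧
      ∀ v : Fin (k + 1) → ℝ, norm2 v ≤ δ → qpar vstar ≤ qpar v) :=
  qpar_minimizer_hard_case_general k lam hmono gpar δ qpar hq hneg r hr2 hgt hgzero vbar hvbar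
    hvbarnorm α hα vstar hvstar
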